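/- Sparse TLS reformulation: for fixed X ∈ ℝ^{m×n}, y ∈ ℝ^m, β₀ ∈ ℝⁿ, λ > 0, and any fixed β ∈ ℝⁿ, the infimum of ‖Δy‖₂² + ‖ΔX‖_F² over all (ΔX, Δy) satisfying y + Δy = (X + ΔX)(β₀ + β) equals ‖X(β₀+β) - y‖₂² / (1 + ‖β₀+β‖₂²). Consequently, β̂ minimizes the constrained TLS objective ‖Δy‖₂² + ‖ΔX‖_F² + λ‖β‖₁ subject to the constraint if and only if β̂ minimizes the unconstrained function β ↦ ‖X(β₀+β) - y‖₂²/(1 + ‖β₀+β‖₂²) + λ‖β‖₁. -/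

import Mathlib

/-! For fixed `b` the constraint says, row by row, `Δyᵢ - ΔXᵢ ⬝ b = rᵢ` with `r = X b - y`.
Cauchy–Schwarz bounds `rᵢ²` by `(Δyᵢ² + ‖ΔXᵢ‖²) (1 + ‖b‖²)`, with equality for corrections
proportional to `(1, -b)`, so the least cost is attained and equals `‖r‖² / (1 + ‖b‖²)`. Since it is
attained, minimizing jointly over `β` and the corrections is the same as minimizing this partial
minimum plus the penalty. -/

open Matrix

section TotalLeastSquares

variable {ι κ : Type*} [Fintype ι] [Fintype κ]

/-- Cauchy–Schwarz for the vectors `(a, u)` and `(1, -v)`. -/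
lemma sq_sub_dotProduct_le (a : ℝ) (u v : κ → ℝ) :
    (a - u ⬝ᵥ v) ^ 2 ≤ (a ^ 2 + ∑ j, u j ^ 2) * (1 + ∑ j, v j ^ 2) := by
  simpa [Fintype.sum_option, dotProduct, mul_comm, sub_eq_add_neg] using
    Finset.sum_mul_sq_le_sq_mul_sq Finset.univ
      (fun o : Option κ => o.elim a u) (fun o : Option κ => o.elim 1 (-v))

def tlsCost (ΔX : Matrix ι κ ℝ) (Δy : ι → ℝ) : ℝ :=
  (∑ i, Δy i ^ 2) + ∑ i, ∑ j, ΔX i j ^ 2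

noncomputable def tlsReduced (X : Matrix ι κ ℝ) (y : ι → ℝ) (b : κ → ℝ) : ℝ :=
  (∑ i, (X *ᵥ b - y) i ^ 2) / (1 + ∑ j, b j ^ 2)

lemma tlsReduced_le_tlsCost {X ΔX : Matrix ι κ ℝ} {y Δy : ι → ℝ} {b : κ → ℝ}
    (h : y + Δy = (X + ΔX) *ᵥ b) : tlsReduced X y b ≤ tlsCost ΔX Δy := by
  have hresidual : X *ᵥ b - y = Δy - ΔX *ᵥ b := by
    rw [add_mulVec] at h
    linear_combination -h
  rw [tlsReduced, tlsCost, div_le_iff₀ (by positivity), hresidual, add_mul, Finset.sum_mul,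
    Finset.sum_mul, ← Finset.sum_add_distrib]
  exact Finset.sum_le_sum fun i _ => by
    rw [← add_mul]
    exact sq_sub_dotProduct_le (Δy i) (ΔX i) b

/-- The optimal correction splits each residual `rᵢ` between `Δyᵢ` and `-ΔXᵢ ⬝ b` in the ratio
`1 : ‖b‖²`. -/
lemma exists_tlsCost_eq_tlsReduced (X : Matrix ι κ ℝ) (y : ι → ℝ) (b : κ → ℝ) :
    ∃ (ΔX : Matrix ι κ ℝ) (Δy : ι → ℝ),
      y + Δy = (X + ΔX) *ᵥ b ∧ tlsCost ΔX Δy = tlsReduced X y b := by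
  obtain ⟨s, hs⟩ : ∃ s : ℝ, 1 + ∑ j, b j ^ 2 = s := ⟨_, rfl⟩
  have hs0 : s ≠ 0 := by rw [← hs]; positivity
  have hbb : ∑ j, b j ^ 2 = s - 1 := by linarith
  have hbb' : b ⬝ᵥ b = s - 1 := by simp only [dotProduct, ← sq, hbb]
  obtain ⟨r, hr⟩ : ∃ r, X *ᵥ b - y = r := ⟨_, rfl⟩
  set c : ι → ℝ := s⁻¹ • r with hc
  have hcs : s • c = r := by simp [hc, smul_smul, hs0]
  refine ⟨-vecMulVec c b, c, ?_, ?_⟩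
  · rw [add_mulVec, neg_mulVec, vecMulVec_mulVec, op_smul_eq_smul, hbb', sub_smul, one_smul]
    linear_combination hcs - hr
  · have hrow (i : ι) : ∑ j, (-vecMulVec c b) i j ^ 2 = c i ^ 2 * (s - 1) := by
      simp only [Matrix.neg_apply, vecMulVec_apply, neg_sq, mul_pow, ← Finset.mul_sum, hbb]
    calc tlsCost (-vecMulVec c b) c = ∑ i, c i ^ 2 * s := by
          simp only [tlsCost, hrow, ← Finset.sum_add_distrib]
          exact Finset.sum_congr rfl fun i _ => by ring
      _ = tlsReduced X y b := by
          simp only [tlsReduced, hr, hs, ← hcs, Pi.smul_apply, smul_eq_mul, Finset.sum_div]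
          exact Finset.sum_congr rfl fun i _ => by field_simp

lemma isLeast_tlsCost (X : Matrix ι κ ℝ) (y : ι → ℝ) (b : κ → ℝ) :
    IsLeast {r | ∃ (ΔX : Matrix ι κ ℝ) (Δy : ι → ℝ), y + Δy = (X + ΔX) *ᵥ b ∧ r = tlsCost ΔX Δy}
      (tlsReduced X y b) := by
  obtain ⟨ΔX, Δy, hfeas, hcost⟩ := exists_tlsCost_eq_tlsReduced X y b
  exact ⟨⟨ΔX, Δy, hfeas, hcost.symm⟩, by rintro _ ⟨ΔX, Δy, h, rfl⟩; exact tlsReduced_le_tlsCost h⟩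

lemma exists_tlsCost_add_le_iff (X : Matrix ι κ ℝ) (y : ι → ℝ) (β₀ : κ → ℝ)
    (pen : (κ → ℝ) → ℝ) (βh : κ → ℝ) :
    (∃ (ΔXh : Matrix ι κ ℝ) (Δyh : ι → ℝ), y + Δyh = (X + ΔXh) *ᵥ (β₀ + βh) ∧
        ∀ (β : κ → ℝ) (ΔX : Matrix ι κ ℝ) (Δy : ι → ℝ), y + Δy = (X + ΔX) *ᵥ (β₀ + β) →
          tlsCost ΔXh Δyh + pen βh ≤ tlsCost ΔX Δy + pen β) ↔
      ∀ β : κ → ℝ, tlsReduced X y (β₀ + βh) + pen βh ≤ tlsReduced X y (β₀ + β) + pen β := by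
  constructor
  · rintro ⟨ΔXh, Δyh, hfeas, hmin⟩ β
    obtain ⟨ΔX, Δy, hβ, hcost⟩ := exists_tlsCost_eq_tlsReduced X y (β₀ + β)
    calc tlsReduced X y (β₀ + βh) + pen βh ≤ tlsCost ΔXh Δyh + pen βh := by
          grw [tlsReduced_le_tlsCost hfeas]
      _ ≤ tlsCost ΔX Δy + pen β := hmin β ΔX Δy hβ
      _ = tlsReduced X y (β₀ + β) + pen β := by rw [hcost]
  · intro hmin
    obtain ⟨ΔXh, Δyh, hfeas, hcost⟩ := exists_tlsCost_eq_tlsReduced X y (β₀ + βh)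
    refine ⟨ΔXh, Δyh, hfeas, fun β ΔX Δy hβ => ?_⟩
    calc tlsCost ΔXh Δyh + pen βh = tlsReduced X y (β₀ + βh) + pen βh := by rw [hcost]
      _ ≤ tlsReduced X y (β₀ + β) + pen β := hmin β
      _ ≤ tlsCost ΔX Δy + pen β := by grw [tlsReduced_le_tlsCost hβ]

end TotalLeastSquares

theorem sparse_tls_reformulation_general (m n : ℕ) (X : Matrix (Fin m) (Fin n) ℝ)
    (y : Fin m → ℝ) (β₀ : Fin n → ℝ) (lam : ℝ) :
    (∀ β : Fin n → ℝ,
      IsGLB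
        {r : ℝ | ∃ (ΔX : Matrix (Fin m) (Fin n) ℝ) (Δy : Fin m → ℝ),
          y + Δy = (X + ΔX).mulVec (β₀ + β) ∧
          r = (∑ i, Δy i ^ 2) + ∑ i, ∑ j, ΔX i j ^ 2}
        ((∑ i, (X.mulVec (β₀ + β) - y) i ^ 2) / (1 + ∑ i, (β₀ + β) i ^ 2))) ∧
    (∀ βh : Fin n → ℝ,
      ((∃ (ΔXh : Matrix (Fin m) (Fin n) ℝ) (Δyh : Fin m → ℝ),
          y + Δyh = (X + ΔXh).mulVec (β₀ + βh) ∧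
          ∀ (β : Fin n → ℝ) (ΔX : Matrix (Fin m) (Fin n) ℝ) (Δy : Fin m → ℝ),
            y + Δy = (X + ΔX).mulVec (β₀ + β) →
            (∑ i, Δyh i ^ 2) + (∑ i, ∑ j, ΔXh i j ^ 2) + lam * ∑ i, |βh i| ≤
              (∑ i, Δy i ^ 2) + (∑ i, ∑ j, ΔX i j ^ 2) + lam * ∑ i, |β i|) ↔
        (∀ β : Fin n → ℝ,
          (∑ i, (X.mulVec (β₀ + βh) - y) i ^ 2) / (1 + ∑ i, (β₀ + βh) i ^ 2) +
              lam * ∑ i, |βh i| ≤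
            (∑ i, (X.mulVec (β₀ + β) - y) i ^ 2) / (1 + ∑ i, (β₀ + β) i ^ 2) +
              lam * ∑ i, |β i|))) :=
  ⟨fun β => (isLeast_tlsCost X y (β₀ + β)).isGLB,
    fun βh => exists_tlsCost_add_le_iff X y β₀ (fun β => lam * ∑ i, |β i|) βh⟩

/-- Sparse TLS reformulation.  For each fixed `β`, the infimum of
`‖Δy‖₂² + ‖ΔX‖_F²` over the feasible set `{(ΔX, Δy) : y + Δy = (X + ΔX)(β₀ + β)}`
equals `‖X(β₀+β) - y‖₂² / (1 + ‖β₀+β‖₂²)`.  Consequently `β̂` minimizes the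
constrained TLS objective `‖Δy‖₂² + ‖ΔX‖_F² + λ‖β‖₁` over all feasible
`(β, ΔX, Δy)` iff `β̂` minimizes
`β ↦ ‖X(β₀+β) - y‖₂²/(1 + ‖β₀+β‖₂²) + λ‖β‖₁`. -/
theorem sparse_tls_reformulation (m n : ℕ) (X : Matrix (Fin m) (Fin n) ℝ)
    (y : Fin m → ℝ) (β₀ : Fin n → ℝ) (lam : ℝ) (hlam : 0 < lam) :
    (∀ β : Fin n → ℝ,
      IsGLB
        {r : ℝ | ∃ (ΔX : Matrix (Fin m) (Fin n) ℝ) (Δy : Fin m → ℝ),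
          y + Δy = (X + ΔX).mulVec (β₀ + β) ∧
          r = (∑ i, Δy i ^ 2) + ∑ i, ∑ j, ΔX i j ^ 2}
        ((∑ i, (X.mulVec (β₀ + β) - y) i ^ 2) / (1 + ∑ i, (β₀ + β) i ^ 2))) ∧
    (∀ βh : Fin n → ℝ,
      ((∃ (ΔXh : Matrix (Fin m) (Fin n) ℝ) (Δyh : Fin m → ℝ),
          y + Δyh = (X + ΔXh).mulVec (β₀ + βh) ∧
          ∀ (β : Fin n → ℝ) (ΔX : Matrix (Fin m) (Fin n) ℝ) (Δy : Fin m → ℝ),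
            y + Δy = (X + ΔX).mulVec (β₀ + β) →
            (∑ i, Δyh i ^ 2) + (∑ i, ∑ j, ΔXh i j ^ 2) + lam * ∑ i, |βh i| ≤
              (∑ i, Δy i ^ 2) + (∑ i, ∑ j, ΔX i j ^ 2) + lam * ∑ i, |β i|) ↔
        (∀ β : Fin n → ℝ,
          (∑ i, (X.mulVec (β₀ + βh) - y) i ^ 2) / (1 + ∑ i, (β₀ + βh) i ^ 2) +
              lam * ∑ i, |βh i| ≤
            (∑ i, (X.mulVec (β₀ + β) - y) i ^ 2) / (1 + ∑ i, (β₀ + β) i ^ 2) +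
              lam * ∑ i, |β i|))) :=
  sparse_tls_reformulation_general m n X y β₀ lam
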